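/- Let R = R₁ × R₂ with the product grading, S = S₁ × S₂, and P = P₁ × P₂ a graded ideal of R with P ∩ S = ∅. Then P is a graded classical S-primary ideal of R if and only if either P₁ is a graded classical S₁-primary ideal of R₁ and P₂ ∩ S₂ ≠ ∅, or P₂ is a graded classical S₂-primary ideal of R₂ and P₁ ∩ S₁ ≠ ∅. -/

import Mathlib

/-- `Q` is a classical `S`-primary ideal relative to the set `hA` of homogeneous elements;
this includes `Q ∩ S = ∅`. -/
def IsClSPrimaryIdealOn {A : Type*} [CommRing A] (hA : Set A) (S : Submonoid A)
    (Q : Ideal A) : Prop :=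
  Disjoint (Q : Set A) (S : Set A) ∧
    ∃ s ∈ S, ∀ x ∈ hA, ∀ y ∈ hA, x * y ∈ Q →
      s * x ∈ Q ∨ ∃ n : ℕ, 0 < n ∧ s * y ^ n ∈ Q

variable {G : Type*} [AddCommGroup G] [DecidableEq G]
variable {R₁ : Type*} [CommRing R₁] (𝒜₁ : G → AddSubmonoid R₁) [GradedRing 𝒜₁]
variable {R₂ : Type*} [CommRing R₂] (𝒜₂ : G → AddSubmonoid R₂) [GradedRing 𝒜₂]

/-! Applying the classical primary condition for `P₁ × P₂` to `(1, 0) * (0, 1) = 0` shows that its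
witness `s` has `s.1 ∈ P₁` or `s.2 ∈ P₂`. Once `P₂` contains some `t ∈ S₂`, every second coordinate
multiplied by `t` lies in `P₂`, so the condition for `P₁ × P₂` with witness `(s₁, t)` is the
condition for `P₁` with witness `s₁`; conversely, testing on pairs `(x, 0)` recovers the condition
for `P₁` from the one for `P₁ × P₂`. -/

open SetLike

def IsClSPrimaryWitness {A : Type*} [CommRing A] (hA : Set A) (Q : Ideal A) (s : A) : Prop :=
  ∀ x ∈ hA, ∀ y ∈ hA, x * y ∈ Q → s * x ∈ Q ∨ ∃ n : ℕ, 0 < n ∧ s * y ^ n ∈ Q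

theorem isClSPrimaryIdealOn_iff {A : Type*} [CommRing A] {hA : Set A} {S : Submonoid A}
    {Q : Ideal A} : IsClSPrimaryIdealOn hA S Q ↔
      Disjoint (Q : Set A) S ∧ ∃ s ∈ S, IsClSPrimaryWitness hA Q s :=
  Iff.rfl

section Prod

variable {A B : Type*} [CommRing A] [CommRing B] {hA : Set A} {hB : Set B} {H : Set (A × B)}
  {I : Ideal A} {J : Ideal B} {S₁ : Submonoid A} {S₂ : Submonoid B}

namespace IsClSPrimaryWitness

theorem prod_left {s : A} {t : B} (hw : IsClSPrimaryWitness hA I s) (hH : ∀ p ∈ H, p.1 ∈ hA)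
    (ht : t ∈ J) : IsClSPrimaryWitness H (I.prod J) (s, t) := by
  intro x hx y hy hxy
  rcases hw x.1 (hH x hx) y.1 (hH y hy) hxy.1 with h | ⟨n, hn, h⟩
  · exact .inl ⟨h, J.mul_mem_right _ ht⟩
  · exact .inr ⟨n, hn, h, J.mul_mem_right _ ht⟩

theorem prod_right {s : A} {t : B} (hw : IsClSPrimaryWitness hB J t) (hH : ∀ p ∈ H, p.2 ∈ hB)
    (hs : s ∈ I) : IsClSPrimaryWitness H (I.prod J) (s, t) := by
  intro x hx y hy hxy
  rcases hw x.2 (hH x hx) y.2 (hH y hy) hxy.2 with h | ⟨n, hn, h⟩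
  · exact .inl ⟨I.mul_mem_right _ hs, h⟩
  · exact .inr ⟨n, hn, I.mul_mem_right _ hs, h⟩

theorem of_prod_left {s : A × B} (hw : IsClSPrimaryWitness H (I.prod J) s)
    (hH : ∀ x ∈ hA, (x, 0) ∈ H) : IsClSPrimaryWitness hA I s.1 := by
  intro x hx y hy hxy
  rcases hw _ (hH x hx) _ (hH y hy) ⟨hxy, by simp⟩ with h | ⟨n, hn, h⟩
  · exact .inl h.1
  · exact .inr ⟨n, hn, by simpa using h.1⟩

theorem of_prod_right {s : A × B} (hw : IsClSPrimaryWitness H (I.prod J) s)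
    (hH : ∀ y ∈ hB, (0, y) ∈ H) : IsClSPrimaryWitness hB J s.2 := by
  intro x hx y hy hxy
  rcases hw _ (hH x hx) _ (hH y hy) ⟨by simp, hxy⟩ with h | ⟨n, hn, h⟩
  · exact .inl h.2
  · exact .inr ⟨n, hn, by simpa using h.2⟩

/-- `(1, 0) * (0, 1) = 0` forces the witness into `I` or `J`. -/
theorem fst_mem_or_snd_mem {s : A × B} (hw : IsClSPrimaryWitness H (I.prod J) s)
    (h₁₀ : (1, 0) ∈ H) (h₀₁ : (0, 1) ∈ H) : s.1 ∈ I ∨ s.2 ∈ J := by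
  rcases hw _ h₁₀ _ h₀₁ (by simp) with h | ⟨n, hn, h⟩
  · exact .inl (by simpa using h.1)
  · exact .inr (by simpa using h.2)

end IsClSPrimaryWitness

theorem disjoint_prod_iff_left (hJ : ((J : Set B) ∩ S₂).Nonempty) :
    Disjoint (I.prod J : Set (A × B)) (S₁.prod S₂ : Set (A × B)) ↔ Disjoint (I : Set A) S₁ := by
  rw [Ideal.coe_prod, Submonoid.coe_prod, Set.disjoint_prod, or_iff_left hJ.not_disjoint]

theorem disjoint_prod_iff_right (hI : ((I : Set A) ∩ S₁).Nonempty) :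
    Disjoint (I.prod J : Set (A × B)) (S₁.prod S₂ : Set (A × B)) ↔ Disjoint (J : Set B) S₂ := by
  rw [Ideal.coe_prod, Submonoid.coe_prod, Set.disjoint_prod, or_iff_right hI.not_disjoint]

theorem isClSPrimaryIdealOn_prod_iff_left (hJ : ((J : Set B) ∩ S₂).Nonempty)
    (hH : ∀ p ∈ H, p.1 ∈ hA) (hH' : ∀ x ∈ hA, (x, 0) ∈ H) :
    IsClSPrimaryIdealOn H (S₁.prod S₂) (I.prod J) ↔ IsClSPrimaryIdealOn hA S₁ I := by
  obtain ⟨t, htJ, htS⟩ := hJ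
  rw [isClSPrimaryIdealOn_iff, isClSPrimaryIdealOn_iff, disjoint_prod_iff_left ⟨t, htJ, htS⟩]
  refine and_congr_right fun _ => ⟨?_, ?_⟩
  · rintro ⟨s, hs, hw⟩
    exact ⟨s.1, hs.1, hw.of_prod_left hH'⟩
  · rintro ⟨s, hs, hw⟩
    exact ⟨(s, t), ⟨hs, htS⟩, hw.prod_left hH htJ⟩

theorem isClSPrimaryIdealOn_prod_iff_right (hI : ((I : Set A) ∩ S₁).Nonempty)
    (hH : ∀ p ∈ H, p.2 ∈ hB) (hH' : ∀ y ∈ hB, (0, y) ∈ H) :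
    IsClSPrimaryIdealOn H (S₁.prod S₂) (I.prod J) ↔ IsClSPrimaryIdealOn hB S₂ J := by
  obtain ⟨t, htI, htS⟩ := hI
  rw [isClSPrimaryIdealOn_iff, isClSPrimaryIdealOn_iff, disjoint_prod_iff_right ⟨t, htI, htS⟩]
  refine and_congr_right fun _ => ⟨?_, ?_⟩
  · rintro ⟨s, hs, hw⟩
    exact ⟨s.2, hs.2, hw.of_prod_right hH'⟩
  · rintro ⟨s, hs, hw⟩
    exact ⟨(t, s), ⟨htS, hs⟩, hw.prod_right hH htI⟩

end Prod

section Graded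

variable {ι A B : Type*} [Semiring A] [Semiring B]

/-- The homogeneous elements of `A × B` for the grading `(A × B)ᵢ = 𝒜 i × ℬ i`. -/
def homogeneousProd (𝒜 : ι → AddSubmonoid A) (ℬ : ι → AddSubmonoid B) : Set (A × B) :=
  {p | ∃ i, p.1 ∈ 𝒜 i ∧ p.2 ∈ ℬ i}

variable {𝒜 : ι → AddSubmonoid A} {ℬ : ι → AddSubmonoid B}

theorem isHomogeneousElem_fst_of_mem_homogeneousProd {p : A × B}
    (hp : p ∈ homogeneousProd 𝒜 ℬ) : IsHomogeneousElem 𝒜 p.1 :=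
  let ⟨i, h, _⟩ := hp; ⟨i, h⟩

theorem isHomogeneousElem_snd_of_mem_homogeneousProd {p : A × B}
    (hp : p ∈ homogeneousProd 𝒜 ℬ) : IsHomogeneousElem ℬ p.2 :=
  let ⟨i, _, h⟩ := hp; ⟨i, h⟩

variable (ℬ) in
theorem mk_zero_mem_homogeneousProd {x : A} (hx : IsHomogeneousElem 𝒜 x) :
    (x, 0) ∈ homogeneousProd 𝒜 ℬ :=
  let ⟨i, h⟩ := hx; ⟨i, h, zero_mem _⟩

variable (𝒜) in
theorem zero_mk_mem_homogeneousProd {y : B} (hy : IsHomogeneousElem ℬ y) :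
    (0, y) ∈ homogeneousProd 𝒜 ℬ :=
  let ⟨i, h⟩ := hy; ⟨i, zero_mem _, h⟩

end Graded

theorem prod_isClSPrimaryIdeal_iff (S₁ : Submonoid R₁) (S₂ : Submonoid R₂)
    (P₁ : Ideal R₁) (P₂ : Ideal R₂) :
    IsClSPrimaryIdealOn {p : R₁ × R₂ | ∃ g : G, p.1 ∈ 𝒜₁ g ∧ p.2 ∈ 𝒜₂ g}
        (S₁.prod S₂) (P₁.prod P₂) ↔
      (IsClSPrimaryIdealOn {r | SetLike.IsHomogeneousElem 𝒜₁ r} S₁ P₁ ∧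
          ((P₂ : Set R₂) ∩ (S₂ : Set R₂)).Nonempty) ∨
      (IsClSPrimaryIdealOn {r | SetLike.IsHomogeneousElem 𝒜₂ r} S₂ P₂ ∧
          ((P₁ : Set R₁) ∩ (S₁ : Set R₁)).Nonempty) := by
  have h₁₀ : ((1 : R₁), (0 : R₂)) ∈ homogeneousProd 𝒜₁ 𝒜₂ :=
    mk_zero_mem_homogeneousProd 𝒜₂ (isHomogeneousElem_one 𝒜₁)
  have h₀₁ : ((0 : R₁), (1 : R₂)) ∈ homogeneousProd 𝒜₁ 𝒜₂ :=
    zero_mk_mem_homogeneousProd 𝒜₁ (isHomogeneousElem_one 𝒜₂)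
  have iff_left (hP₂S₂ : ((P₂ : Set R₂) ∩ S₂).Nonempty) :=
    isClSPrimaryIdealOn_prod_iff_left (H := homogeneousProd 𝒜₁ 𝒜₂)
      (hA := {r | IsHomogeneousElem 𝒜₁ r}) (S₁ := S₁) (I := P₁) hP₂S₂
      (fun _ => isHomogeneousElem_fst_of_mem_homogeneousProd)
      (fun _ => mk_zero_mem_homogeneousProd 𝒜₂)
  have iff_right (hP₁S₁ : ((P₁ : Set R₁) ∩ S₁).Nonempty) :=
    isClSPrimaryIdealOn_prod_iff_right (H := homogeneousProd 𝒜₁ 𝒜₂)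
      (hB := {r | IsHomogeneousElem 𝒜₂ r}) (S₂ := S₂) (J := P₂) hP₁S₁
      (fun _ => isHomogeneousElem_snd_of_mem_homogeneousProd)
      (fun _ => zero_mk_mem_homogeneousProd 𝒜₁)
  constructor
  · intro h
    obtain ⟨-, s, ⟨hs₁, hs₂⟩, hw⟩ := isClSPrimaryIdealOn_iff.mp h
    rcases hw.fst_mem_or_snd_mem h₁₀ h₀₁ with hsP₁ | hsP₂
    · exact .inr ⟨(iff_right ⟨s.1, hsP₁, hs₁⟩).mp h, s.1, hsP₁, hs₁⟩
    · exact .inl ⟨(iff_left ⟨s.2, hsP₂, hs₂⟩).mp h, s.2, hsP₂, hs₂⟩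
  · rintro (⟨h, hne⟩ | ⟨h, hne⟩)
    · exact (iff_left hne).mpr h
    · exact (iff_right hne).mpr h
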